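/- Under the hypotheses of the previous statement (DRS with monotone A, B and fixed point w⋆), if additionally ‖w^k − w⋆‖² ≤ μ²‖w^{k+1} − w^k‖² for some μ > 0, then ‖w^{k+1} − w⋆‖² ≤ (1 − (1/μ²)(2/λ − 1))‖w^k − w⋆‖². -/
import Mathlib


open scoped RealInnerProductSpace

/-- A set-valued operator is monotone. -/
def MonotoneOp {n : ℕ} (A : EuclideanSpace ℝ (Fin n) → Set (EuclideanSpace ℝ (Fin n))) : Prop :=
  ∀ ⦃x y u v⦄, u ∈ A x → v ∈ A y → 0 ≤ ⟪u - v, x - y⟫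

/-- A set-valued operator is maximally monotone. -/
def MaximallyMonotoneOp {n : ℕ}
    (A : EuclideanSpace ℝ (Fin n) → Set (EuclideanSpace ℝ (Fin n))) : Prop :=
  MonotoneOp A ∧ ∀ x u, (∀ y v, v ∈ A y → 0 ≤ ⟪u - v, x - y⟫) → u ∈ A x

lemma stmt9_key_aux {n : ℕ} (d a b : EuclideanSpace ℝ (Fin n)) (h1 : 0 ≤ ⟪d - a, a⟫)
    (h2 : 0 ≤ ⟪(2:ℝ) • a - d - b, b⟫) : ⟪d, b - a⟫ + ‖b - a‖ ^ 2 ≤ 0 := by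
  rw [← real_inner_self_eq_norm_sq]
  simp only [inner_sub_left, inner_sub_right, real_inner_smul_left] at *
  have c1 := real_inner_comm a b
  have c2 := real_inner_comm d a
  have c3 := real_inner_comm d b
  linarith

lemma stmt9_fin_aux (D E P lam μ : ℝ) (hlam0 : 0 < lam) (hlam2 : lam < 2) (hμ : 0 < μ)
    (hkey : P + E ≤ 0) (heb : D ≤ μ^2 * lam^2 * E) :
    D + 2*lam*P + lam^2*E ≤ (1 - (1/μ^2)*(2/lam - 1)) * D := by
  have h2 : (2-lam)/(μ^2*lam) * D ≤ lam*(2-lam)*E := by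
    rw [div_mul_eq_mul_div, div_le_iff₀ (by positivity)]; nlinarith
  have h3 : (1 - (1/μ^2)*(2/lam-1)) = 1 - (2-lam)/(μ^2*lam) := by field_simp
  rw [h3]; nlinarith

/-- one-step contraction of DRS under the error bound, combining the
monotonicity inequality of the previous statement with `‖wᵏ−w⋆‖² ≤ μ²‖wᵏ⁺¹−wᵏ‖²`. -/
theorem stmt9 {n : ℕ} (A B : EuclideanSpace ℝ (Fin n) → Set (EuclideanSpace ℝ (Fin n)))
    (hA : MaximallyMonotoneOp A) (hB : MaximallyMonotoneOp B)
    (hBsingle : ∀ x, (B x).Subsingleton)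
    (γ lam : ℝ) (hγ : 0 < γ) (hlam : lam ∈ Set.Ioo (0 : ℝ) 2)
    (JA JB : EuclideanSpace ℝ (Fin n) → EuclideanSpace ℝ (Fin n))
    (hJA : ∀ w, γ⁻¹ • (w - JA w) ∈ A (JA w))
    (hJB : ∀ w, γ⁻¹ • (w - JB w) ∈ B (JB w))
    (T : EuclideanSpace ℝ (Fin n) → EuclideanSpace ℝ (Fin n))
    (hT : ∀ w, T w = w + lam • (JA ((2 : ℝ) • JB w - w) - JB w))
    (wstar : EuclideanSpace ℝ (Fin n)) (hfix : T wstar = wstar)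
    (xstar : EuclideanSpace ℝ (Fin n)) (hxstar : xstar = JB wstar)
    (wk xk yk wk1 : EuclideanSpace ℝ (Fin n))
    (hx : xk = JB wk) (hy : yk = JA ((2 : ℝ) • xk - wk))
    (hw1 : wk1 = wk + lam • (yk - xk))
    (μ : ℝ) (hμ : 0 < μ)
    (hEB : ‖wk - wstar‖ ^ 2 ≤ μ ^ 2 * ‖wk1 - wk‖ ^ 2) :
    ‖wk1 - wstar‖ ^ 2 ≤ (1 - (1 / μ ^ 2) * (2 / lam - 1)) * ‖wk - wstar‖ ^ 2 := by
  obtain ⟨hlam0, hlam2⟩ := hlam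
  -- fixed point: JA (2•xstar - wstar) = xstar
  have hystar : JA ((2 : ℝ) • xstar - wstar) = xstar := by
    have h := hT wstar
    rw [hfix] at h
    have h2 : lam • (JA ((2 : ℝ) • JB wstar - wstar) - JB wstar) = 0 := by
      have := h.symm
      rwa [add_eq_left] at this
    have h3 : JA ((2 : ℝ) • JB wstar - wstar) - JB wstar = 0 :=
      (smul_eq_zero.mp h2).resolve_left (ne_of_gt hlam0)
    rw [hxstar]
    rw [sub_eq_zero] at h3
    exact h3
  -- monotonicity of B
  have hBkey : 0 ≤ ⟪(wk - wstar) - (xk - xstar), xk - xstar⟫ := by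
    have h := hB.1 (hJB wk) (hJB wstar)
    rw [← hx, ← hxstar, ← smul_sub, real_inner_smul_left] at h
    have hγi : 0 < γ⁻¹ := inv_pos.mpr hγ
    have he : (wk - xk) - (wstar - xstar) = (wk - wstar) - (xk - xstar) := by abel
    rw [he] at h
    nlinarith [h]
  -- monotonicity of A
  have hAkey : 0 ≤ ⟪(2:ℝ) • (xk - xstar) - (wk - wstar) - (yk - xstar), yk - xstar⟫ := by
    have h := hA.1 (hJA ((2 : ℝ) • xk - wk)) (hJA ((2 : ℝ) • xstar - wstar))
    rw [hystar, ← hy, ← smul_sub, real_inner_smul_left] at h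
    have hγi : 0 < γ⁻¹ := inv_pos.mpr hγ
    have he : ((2:ℝ) • xk - wk - yk) - ((2:ℝ) • xstar - wstar - xstar)
        = (2:ℝ) • (xk - xstar) - (wk - wstar) - (yk - xstar) := by
      rw [smul_sub]; abel
    rw [he] at h
    nlinarith [h]
  have hkey := stmt9_key_aux (wk - wstar) (xk - xstar) (yk - xstar) hBkey hAkey
  have hba : (yk - xstar) - (xk - xstar) = yk - xk := by abel
  rw [hba] at hkey
  have hexp : ‖wk1 - wstar‖ ^ 2
      = ‖wk - wstar‖ ^ 2 + 2 * lam * ⟪wk - wstar, yk - xk⟫ + lam ^ 2 * ‖yk - xk‖ ^ 2 := by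
    have hv : wk1 - wstar = (wk - wstar) + lam • (yk - xk) := by rw [hw1]; abel
    rw [hv, norm_add_sq_real, real_inner_smul_right, norm_smul, Real.norm_eq_abs,
      abs_of_pos hlam0, mul_pow]
    ring
  have heb : ‖wk - wstar‖ ^ 2 ≤ μ ^ 2 * lam ^ 2 * ‖yk - xk‖ ^ 2 := by
    have hv : wk1 - wk = lam • (yk - xk) := by rw [hw1]; abel
    calc ‖wk - wstar‖ ^ 2 ≤ μ ^ 2 * ‖wk1 - wk‖ ^ 2 := hEB
      _ = μ ^ 2 * lam ^ 2 * ‖yk - xk‖ ^ 2 := by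
          rw [hv, norm_smul, Real.norm_eq_abs, abs_of_pos hlam0, mul_pow]; ring
  rw [hexp]
  exact stmt9_fin_aux _ _ _ _ _ hlam0 hlam2 hμ hkey heb
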